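/- arXiv:2002.04324 — 5 statements merged into one kernel-verified Lean document; each statement's English description precedes it below -/
import Mathlib

section
/- Let n ≥ 1 and let A be a symmetric positive definite real n×n matrix, with q(y) = yᵀAy and α(y) = √(q(y)). If E₀, E₁, E₂, E₃, E₄ are polynomial functions on ℝⁿ such that E₄(y)α(y)⁴ + E₃(y)α(y)³ + E₂(y)α(y)² + E₁(y)α(y) + E₀(y) = 0 for every y ∈ ℝⁿ, then E₄(y)q(y)² + E₂(y)q(y) + E₀(y) = 0 and E₃(y)q(y) + E₁(y) = 0 for every y ∈ ℝⁿ. -/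
/-!
Put `F = E₄q² + E₂q + E₀` and `G = E₃q + E₁`, so that the hypothesis reads `F + αG = 0`.
On the line through a nonzero `y` we have `α(ty) = |t|α(y)` with `α(y) > 0`, so the
polynomials `p(t) = F(ty)` and `g(t) = α(y)G(ty)` satisfy `p(t) + |t|g(t) = 0`. Comparing
`t > 0` with `t < 0` gives the two polynomial identities `p ± Xg = 0`, each with infinitely
many roots, hence `p = g = 0`. Evaluating at `t = 1`, and at `t = 0` for the origin, gives
`F = G = 0` everywhere.
-/

open Matrix MvPolynomial

namespace Polynomial

theorem eq_zero_and_eq_zero_of_eval_add_abs_mul_eval {p g : ℝ[X]}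
    (h : ∀ t : ℝ, p.eval t + |t| * g.eval t = 0) : p = 0 ∧ g = 0 := by
  have hpos : p + X * g = 0 := eq_zero_of_infinite_isRoot _ <|
    (Set.Ioi_infinite 0).mono fun t (ht : 0 < t) => by simpa [abs_of_pos ht] using h t
  have hneg : p - X * g = 0 := eq_zero_of_infinite_isRoot _ <|
    (Set.Iio_infinite 0).mono fun t (ht : t < 0) => by
      simpa [abs_of_neg ht, sub_eq_add_neg] using h t
  have hXg : (2 : ℝ[X]) * (X * g) = 0 := by linear_combination hpos - hneg
  have hg : g = 0 := by simpa [X_ne_zero] using hXg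
  exact ⟨by simpa [hg] using hpos, hg⟩

end Polynomial

theorem Matrix.smul_dotProduct_mulVec_smul {n : Type*} [Fintype n] (A : Matrix n n ℝ) (t : ℝ)
    (y : n → ℝ) : (t • y) ⬝ᵥ A *ᵥ (t • y) = t ^ 2 * (y ⬝ᵥ A *ᵥ y) := by
  simp only [mulVec_smul, dotProduct_smul, smul_dotProduct, smul_eq_mul]
  ring

namespace MvPolynomial

variable {σ : Type*}

theorem eval_aeval_C_mul_X (y : σ → ℝ) (t : ℝ) (P : MvPolynomial σ ℝ) :
    (aeval (fun i => Polynomial.C (y i) * Polynomial.X) P).eval t = eval (t • y) P := by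
  induction P using MvPolynomial.induction_on with
  | C a => simp
  | add P Q hP hQ => simp [hP, hQ]
  | mul_X P i hP =>
    simp only [map_mul, Polynomial.eval_mul, hP, aeval_X, eval_X, Polynomial.eval_C,
      Polynomial.eval_X, Pi.smul_apply, smul_eq_mul]
    ring

theorem eval_eq_zero_and_eval_eq_zero_of_eval_add_mul_eval [Nonempty σ]
    {F G : MvPolynomial σ ℝ} {α : (σ → ℝ) → ℝ} (hα_smul : ∀ (t : ℝ) y, α (t • y) = |t| * α y)
    (hα_ne : ∀ y, y ≠ 0 → α y ≠ 0) (h : ∀ y, eval y F + α y * eval y G = 0) (y : σ → ℝ) :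
    eval y F = 0 ∧ eval y G = 0 := by
  have hline (y₀ : σ → ℝ) (hy₀ : y₀ ≠ 0) (t : ℝ) :
      eval (t • y₀) F = 0 ∧ eval (t • y₀) G = 0 := by
    set L : MvPolynomial σ ℝ →ₐ[ℝ] Polynomial ℝ :=
      aeval fun i => Polynomial.C (y₀ i) * Polynomial.X
    obtain ⟨hF, hG⟩ := Polynomial.eq_zero_and_eq_zero_of_eval_add_abs_mul_eval
      (p := L F) (g := Polynomial.C (α y₀) * L G) fun s => by
        simpa [L, eval_aeval_C_mul_X, hα_smul, mul_assoc] using h (s • y₀)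
    have hG' : L G = 0 := by simpa [hα_ne y₀ hy₀] using hG
    rw [← eval_aeval_C_mul_X, ← eval_aeval_C_mul_X]
    simp [L, hF, hG']
  by_cases hy : y = 0
  · simpa [hy] using hline 1 one_ne_zero 0
  · simpa using hline y hy 1

end MvPolynomial

/-- Splitting a quartic identity `E₄α⁴ + E₃α³ + E₂α² + E₁α + E₀ = 0` in the irrational
quantity `α = √q` into its even and odd parts. -/
theorem stmt_1 (n : ℕ) (hn : 1 ≤ n) (A : Matrix (Fin n) (Fin n) ℝ) (hA : A.PosDef)
    (E₀ E₁ E₂ E₃ E₄ : MvPolynomial (Fin n) ℝ)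
    (h : ∀ y : Fin n → ℝ,
      eval y E₄ * Real.sqrt (y ⬝ᵥ A *ᵥ y) ^ 4 +
      eval y E₃ * Real.sqrt (y ⬝ᵥ A *ᵥ y) ^ 3 +
      eval y E₂ * Real.sqrt (y ⬝ᵥ A *ᵥ y) ^ 2 +
      eval y E₁ * Real.sqrt (y ⬝ᵥ A *ᵥ y) + eval y E₀ = 0) :
    (∀ y : Fin n → ℝ,
      eval y E₄ * (y ⬝ᵥ A *ᵥ y) ^ 2 + eval y E₂ * (y ⬝ᵥ A *ᵥ y) + eval y E₀ = 0) ∧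
    (∀ y : Fin n → ℝ, eval y E₃ * (y ⬝ᵥ A *ᵥ y) + eval y E₁ = 0) := by
  have : Nonempty (Fin n) := ⟨⟨0, hn⟩⟩
  set Q : MvPolynomial (Fin n) ℝ := ∑ i, X i * A.toMvPolynomial i
  have hQ (y : Fin n → ℝ) : eval y Q = y ⬝ᵥ A *ᵥ y := by
    simp [Q, dotProduct, toMvPolynomial_eval_eq_apply]
  have key := eval_eq_zero_and_eval_eq_zero_of_eval_add_mul_eval
    (F := E₄ * Q ^ 2 + E₂ * Q + E₀) (G := E₃ * Q + E₁) (α := fun y => √(y ⬝ᵥ A *ᵥ y))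
    (fun t y => by
      rw [smul_dotProduct_mulVec_smul, Real.sqrt_mul (sq_nonneg t), Real.sqrt_sq_eq_abs])
    (fun y hy => (Real.sqrt_pos.mpr (by simpa using hA.dotProduct_mulVec_pos hy)).ne')
    (fun y => by
      have hs := Real.sq_sqrt (by simpa using hA.posSemidef.dotProduct_mulVec_nonneg y)
      simp only [map_add, map_mul, map_pow, hQ]
      linear_combination h y - (eval y E₄ * (√(y ⬝ᵥ A *ᵥ y) ^ 2 + y ⬝ᵥ A *ᵥ y)
        + eval y E₃ * √(y ⬝ᵥ A *ᵥ y) + eval y E₂) * hs)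
  exact ⟨fun y => by simpa [hQ] using (key y).1, fun y => by simpa [hQ] using (key y).2⟩
end

section
/- Let n ≥ 2 and let A be a symmetric positive definite real n×n matrix with q(y) = yᵀAy, and let b ∈ ℝⁿ be nonzero with β(y) = ∑_i b_i y_i. Suppose E₄ and E₂ are polynomial functions on ℝⁿ and T is a quadratic form on ℝⁿ (T(y) = yᵀBy for some symmetric real matrix B) such that (E₄(y)q(y) + E₂(y))·q(y) + T(y)·β(y)² = 0 for every y ∈ ℝⁿ. Then there exists λ ∈ ℝ such that T(y) = λ·q(y) for all y, and E₄(y)q(y) + E₂(y) + λ·β(y)² = 0 for every y ∈ ℝⁿ. -/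
/-!
Read the identity as one between polynomials: `(E₄ q + E₂) q + T β² = 0` in `ℝ[y₁, …, yₙ]`.
The linear form `β` is a prime element, and since `n ≥ 2` it vanishes at some `y ≠ 0`, where
`q(y) > 0`; so `β ∤ q`, and therefore `β² ∣ E₄ q + E₂`. Writing `E₄ q + E₂ = β² r` and cancelling
`β²` gives `r q = -T`. As `q` is a nonzero form of degree 2 and `T` has degree at most 2, `r` is a
constant `-λ`.
-/

open Matrix MvPolynomial

theorem Prime.exists_eq_sq_mul_of_mul_add_mul_sq_eq_zero {R : Type*} [CommRing R] [IsDomain R]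
    {p P q T : R} (hp : Prime p) (hpq : ¬ p ∣ q) (h : P * q + T * p ^ 2 = 0) :
    ∃ r, P = p ^ 2 * r ∧ r * q = -T := by
  obtain ⟨r, rfl⟩ : p ^ 2 ∣ P := hp.pow_dvd_of_dvd_mul_right 2 hpq ⟨-T, by linear_combination h⟩
  refine ⟨r, rfl, ?_⟩
  have : p ^ 2 * (r * q + T) = 0 := by linear_combination h
  linear_combination (mul_eq_zero.mp this).resolve_left (pow_ne_zero 2 hp.ne_zero)

theorem MvPolynomial.exists_eq_C_of_mul_eq {σ K : Type*} [CommRing K] [IsDomain K]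
    {r φ ψ : MvPolynomial σ K} {n : ℕ} (hφ : φ.IsHomogeneous n) (hφ0 : φ ≠ 0)
    (hψ : ψ.totalDegree ≤ n) (h : r * φ = ψ) :
    ∃ c, r = C c := by
  rcases eq_or_ne r 0 with rfl | hr
  · exact ⟨0, C_0.symm⟩
  have : r.totalDegree + n ≤ n := by
    rwa [← hφ.totalDegree hφ0, ← totalDegree_mul_of_isDomain hr hφ0, h, hφ.totalDegree hφ0]
  exact ⟨_, totalDegree_eq_zero_iff_eq_C.mp (by omega)⟩

namespace Matrix

variable {σ K : Type*} [Fintype σ]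

noncomputable def quadraticPoly [CommSemiring K] (M : Matrix σ σ K) : MvPolynomial σ K :=
  ∑ i, X i * M.toMvPolynomial i

theorem eval_quadraticPoly [CommSemiring K] (M : Matrix σ σ K) (y : σ → K) :
    eval y M.quadraticPoly = y ⬝ᵥ M *ᵥ y := by
  simp [quadraticPoly, toMvPolynomial_eval_eq_apply, dotProduct]

theorem isHomogeneous_quadraticPoly [CommSemiring K] (M : Matrix σ σ K) :
    M.quadraticPoly.IsHomogeneous 2 :=
  IsHomogeneous.sum _ _ _ fun i _ => (isHomogeneous_X K i).mul (M.toMvPolynomial_isHomogeneous i)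

theorem exists_ne_zero_dotProduct_eq_zero [Field K] (hσ : 2 ≤ Fintype.card σ) (b : σ → K) :
    ∃ y ≠ 0, b ⬝ᵥ y = 0 := by
  have : LinearMap.ker (dotProductBilin K K b) ≠ ⊥ :=
    LinearMap.ker_ne_bot_of_finrank_lt <| by
      simp only [Module.finrank_self, Module.finrank_fintype_fun_eq_card]
      omega
  obtain ⟨y, hy, hy0⟩ := Submodule.exists_mem_ne_zero_of_ne_bot this
  exact ⟨y, hy0, hy⟩

end Matrix

namespace MvPolynomial

variable {σ K : Type*} [Fintype σ]

noncomputable def linearPoly [CommSemiring K] (b : σ → K) : MvPolynomial σ K :=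
  ∑ i, C (b i) * X i

theorem eval_linearPoly [CommSemiring K] (b y : σ → K) : eval y (linearPoly b) = b ⬝ᵥ y := by
  simp [linearPoly, dotProduct]

theorem linearPoly_eq_sumSMulX [CommRing K] (b : σ → K) :
    linearPoly b = sumSMulX (Finsupp.equivFunOnFinite.symm b) := by
  simp [linearPoly, sumSMulX, Finsupp.linearCombination_apply, Finsupp.sum_fintype, smul_eq_C_mul]

theorem prime_linearPoly [Field K] {b : σ → K} (hb : b ≠ 0) : Prime (linearPoly b) := by
  obtain ⟨i, hi⟩ := Function.ne_iff.mp hb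
  rw [linearPoly_eq_sumSMulX]
  refine (irreducible_sumSMulX _ ⟨i, by simpa using hi⟩ fun r hr => ?_).prime
  exact isUnit_iff_ne_zero.mpr (ne_zero_of_dvd_ne_zero (by simpa using hi) (hr i))

end MvPolynomial

theorem Matrix.PosDef.linearPoly_not_dvd_quadraticPoly {σ : Type*} [Fintype σ]
    {A : Matrix σ σ ℝ} (hA : A.PosDef) (hσ : 2 ≤ Fintype.card σ) (b : σ → ℝ) :
    ¬ linearPoly b ∣ A.quadraticPoly := by
  obtain ⟨y, hy0, hby⟩ := exists_ne_zero_dotProduct_eq_zero hσ b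
  rintro ⟨g, hg⟩
  have hpos := hA.dotProduct_mulVec_pos hy0
  rw [star_trivial, ← eval_quadraticPoly, hg, map_mul, eval_linearPoly, hby, zero_mul] at hpos
  exact hpos.false

theorem stmt_6_general (n : ℕ) (hn : 2 ≤ n) (A : Matrix (Fin n) (Fin n) ℝ) (hA : A.PosDef)
    (b : Fin n → ℝ) (hb : b ≠ 0)
    (E₄ E₂ : MvPolynomial (Fin n) ℝ)
    (B : Matrix (Fin n) (Fin n) ℝ)
    (h : ∀ y : Fin n → ℝ,
      (eval y E₄ * (y ⬝ᵥ A *ᵥ y) + eval y E₂) * (y ⬝ᵥ A *ᵥ y) +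
        (y ⬝ᵥ B *ᵥ y) * (b ⬝ᵥ y) ^ 2 = 0) :
    ∃ l : ℝ, (∀ y : Fin n → ℝ, y ⬝ᵥ B *ᵥ y = l * (y ⬝ᵥ A *ᵥ y)) ∧
      (∀ y : Fin n → ℝ,
        eval y E₄ * (y ⬝ᵥ A *ᵥ y) + eval y E₂ + l * (b ⬝ᵥ y) ^ 2 = 0) := by
  have hpoly : (E₄ * A.quadraticPoly + E₂) * A.quadraticPoly +
      B.quadraticPoly * linearPoly b ^ 2 = 0 :=
    MvPolynomial.funext fun y => by simpa [eval_quadraticPoly, eval_linearPoly] using h y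
  have hβq := hA.linearPoly_not_dvd_quadraticPoly (by simpa using hn) b
  obtain ⟨r, hP, hT⟩ := (prime_linearPoly hb).exists_eq_sq_mul_of_mul_add_mul_sq_eq_zero hβq hpoly
  obtain ⟨c, rfl⟩ := exists_eq_C_of_mul_eq A.isHomogeneous_quadraticPoly
    (fun hq => hβq (hq ▸ dvd_zero _)) B.isHomogeneous_quadraticPoly.neg.totalDegree_le hT
  refine ⟨-c, fun y => ?_, fun y => ?_⟩
  · have := congrArg (eval y) hT
    simp only [map_mul, map_neg, eval_C, eval_quadraticPoly] at this
    linarith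
  · have := congrArg (eval y) hP
    simp only [map_add, map_mul, map_pow, eval_C, eval_quadraticPoly, eval_linearPoly] at this
    linarith

/-- The combined step (3.18)–(3.20): from `(E₄ q + E₂)·q + T·β² = 0` with `T` a quadratic
form and `β` a nonzero linear form, deduce `T = λ q` and `E₄ q + E₂ + λ β² = 0`. -/
theorem stmt_6 (n : ℕ) (hn : 2 ≤ n) (A : Matrix (Fin n) (Fin n) ℝ) (hA : A.PosDef)
    (b : Fin n → ℝ) (hb : b ≠ 0)
    (E₄ E₂ : MvPolynomial (Fin n) ℝ)
    (B : Matrix (Fin n) (Fin n) ℝ) (hB : B.IsSymm)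
    (h : ∀ y : Fin n → ℝ,
      (eval y E₄ * (y ⬝ᵥ A *ᵥ y) + eval y E₂) * (y ⬝ᵥ A *ᵥ y) +
        (y ⬝ᵥ B *ᵥ y) * (b ⬝ᵥ y) ^ 2 = 0) :
    ∃ l : ℝ, (∀ y : Fin n → ℝ, y ⬝ᵥ B *ᵥ y = l * (y ⬝ᵥ A *ᵥ y)) ∧
      (∀ y : Fin n → ℝ,
        eval y E₄ * (y ⬝ᵥ A *ᵥ y) + eval y E₂ + l * (b ⬝ᵥ y) ^ 2 = 0) :=
  stmt_6_general n hn A hA b hb E₄ E₂ B h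
end

section
/- Let n ≥ 2, let A be a symmetric positive definite real n×n matrix, and let α(y) = √(yᵀAy). If L is a linear form on ℝⁿ and there exists a polynomial function p on ℝⁿ such that L(y)·α(y) = p(y) for every y ∈ ℝⁿ, then L is identically zero. -/
open Matrix MvPolynomial

/-! A polynomial restricted to the line `ℝ y` is a polynomial in one variable, while along that
line `L · α` is `t ↦ L(y) α(y) t |t|`. A polynomial agreeing with `a t²` on `[0, ∞)` and with
`-a t²` on `(-∞, 0]` forces `a = -a`, so `L(y) α(y) = 0`, and `α(y) > 0` for `y ≠ 0`. -/

theorem MvPolynomial.exists_eval_eq_eval_smul {σ R : Type*} [CommSemiring R]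
    (p : MvPolynomial σ R) (y : σ → R) :
    ∃ P : Polynomial R, ∀ t : R, P.eval t = eval (t • y) p := by
  refine ⟨aeval (fun i => Polynomial.C (y i) * Polynomial.X) p, fun t => ?_⟩
  rw [← Polynomial.coe_aeval_eq_eval, ← AlgHom.comp_apply, comp_aeval]
  change _ = aeval (t • y) p
  congr 2 with i
  rw [map_mul, Polynomial.aeval_C, Polynomial.aeval_X, Algebra.algebraMap_self_apply,
    Pi.smul_apply, smul_eq_mul, mul_comm]

theorem Polynomial.eq_zero_of_forall_eval_eq_mul_mul_abs {P : Polynomial ℝ} {a : ℝ}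
    (hP : ∀ t, P.eval t = a * (t * |t|)) : a = 0 := by
  have on_nonneg : P = Polynomial.C a * Polynomial.X ^ 2 :=
    Polynomial.eq_of_infinite_eval_eq _ _ <| (Set.Ici_infinite 0).mono fun t (ht : 0 ≤ t) => by
      simp only [Set.mem_ofPred_eq, hP, abs_of_nonneg ht, Polynomial.eval_mul, Polynomial.eval_C,
        Polynomial.eval_pow, Polynomial.eval_X]
      ring
  have on_nonpos : P = -(Polynomial.C a * Polynomial.X ^ 2) :=
    Polynomial.eq_of_infinite_eval_eq _ _ <| (Set.Iic_infinite 0).mono fun t (ht : t ≤ 0) => by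
      simp only [Set.mem_ofPred_eq, hP, abs_of_nonpos ht, Polynomial.eval_neg, Polynomial.eval_mul,
        Polynomial.eval_C, Polynomial.eval_pow, Polynomial.eval_X]
      ring
  have := congrArg (Polynomial.eval 1) (on_nonneg.symm.trans on_nonpos)
  simp only [Polynomial.eval_neg, Polynomial.eval_mul, Polynomial.eval_C, Polynomial.eval_pow,
    Polynomial.eval_X, one_pow, mul_one] at this
  linarith

theorem Matrix.sqrt_smul_dotProduct_mulVec_smul {n : Type*} [Fintype n]
    (A : Matrix n n ℝ) (y : n → ℝ) (t : ℝ) :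
    Real.sqrt ((t • y) ⬝ᵥ A *ᵥ (t • y)) = |t| * Real.sqrt (y ⬝ᵥ A *ᵥ y) := by
  rw [mulVec_smul, smul_dotProduct, dotProduct_smul, smul_smul, smul_eq_mul, ← sq,
    Real.sqrt_mul (sq_nonneg t), Real.sqrt_sq_eq_abs]

theorem stmt_13_general (n : ℕ) (A : Matrix (Fin n) (Fin n) ℝ) (hA : A.PosDef)
    (c : Fin n → ℝ) (p : MvPolynomial (Fin n) ℝ)
    (h : ∀ y : Fin n → ℝ, (c ⬝ᵥ y) * Real.sqrt (y ⬝ᵥ A *ᵥ y) = eval y p) :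
    ∀ y : Fin n → ℝ, c ⬝ᵥ y = 0 := by
  intro y
  rcases eq_or_ne y 0 with rfl | hy
  · exact dotProduct_zero c
  obtain ⟨P, hP⟩ := p.exists_eval_eq_eval_smul y
  have on_line : ∀ t, P.eval t = (c ⬝ᵥ y) * Real.sqrt (y ⬝ᵥ A *ᵥ y) * (t * |t|) := fun t => by
    rw [hP, ← h, dotProduct_smul, sqrt_smul_dotProduct_mulVec_smul, smul_eq_mul]
    ring
  have hα : 0 < Real.sqrt (y ⬝ᵥ A *ᵥ y) :=
    Real.sqrt_pos.mpr (by simpa using hA.dotProduct_mulVec_pos hy)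
  exact (mul_eq_zero.mp (Polynomial.eq_zero_of_forall_eval_eq_mul_mul_abs on_line)).resolve_right
    hα.ne'

/-- Irrationality lemma: if `L(y)·α(y)` is a polynomial function of `y`, where `L` is a
linear form and `α` the norm of a symmetric positive definite matrix (`n ≥ 2`), then `L`
is identically zero. -/
theorem stmt_13 (n : ℕ) (hn : 2 ≤ n) (A : Matrix (Fin n) (Fin n) ℝ) (hA : A.PosDef)
    (c : Fin n → ℝ) (p : MvPolynomial (Fin n) ℝ)
    (h : ∀ y : Fin n → ℝ, (c ⬝ᵥ y) * Real.sqrt (y ⬝ᵥ A *ᵥ y) = eval y p) :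
    ∀ y : Fin n → ℝ, c ⬝ᵥ y = 0 :=
  stmt_13_general n A hA c p h
end

section
/- Let n ≥ 2, let A be a symmetric positive definite real n×n matrix, let b ∈ ℝⁿ, and set α(y) = √(yᵀAy), β(y) = ∑_i b_i y_i, and F = α + β. Let c₀ be a linear form on ℝⁿ and c ∈ ℝ. If all third partial derivatives ∂³/∂yʲ∂yᵏ∂yˡ of the function y ↦ c₀(y)·F(y) + c²·F(y)² vanish at every y ≠ 0, then c₀(y) = −2c²·β(y) for all y ∈ ℝⁿ; in particular, if c₀ = 0 and b ≠ 0, then c = 0. -/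
/-!
Expanding `F² = α² + 2αβ + β²` writes `c₀ F + c² F²` as `H + Q` with `H = (c₀ + 2c²β) α` odd and
positively homogeneous of degree 2 and `Q = c₀ β + c² (α² + β²)` even. Vanishing third derivatives
make each second partial of `H + Q` constant on `ℝⁿ ∖ {0}`, which is connected for `n ≥ 2`; there
the second partials of `H` are odd and those of `Q` even, so those of `H` vanish. The first
partials of `H` are then constant and homogeneous of degree 1, hence zero, and so is `H` itself,
which is constant and homogeneous of degree 2. Since `α > 0` off the origin, `c₀ + 2c²β = 0`.
-/

open Matrix
open scoped ContDiff

section DirectionalDerivatives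

variable {E : Type*} [NormedAddCommGroup E] [NormedSpace ℝ E] {f g : E → ℝ}

theorem Module.Basis.continuousLinearMap_eq_zero {ι : Type*} (b : Module.Basis ι ℝ E)
    {φ : E →L[ℝ] ℝ} (h : ∀ i, φ (b i) = 0) : φ = 0 :=
  ContinuousLinearMap.coe_injective <| b.ext fun i => by simpa using h i

theorem mul_fderiv_apply_smul_of_comp_smul {c k : ℝ} (hf : ∀ x, f (c • x) = k * f x)
    (x v : E) : c * fderiv ℝ f (c • x) v = k * fderiv ℝ f x v := by
  have hcomp : (fun x => f (c • x)) = k • f := funext hf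
  have h := fderiv_comp_smul (𝕜 := ℝ) (f := f) (x := x) c
  rw [hcomp, fderiv_const_smul_field] at h
  simpa using (congrArg (· v) h).symm

theorem Function.Odd.even_fderiv_apply (hf : f.Odd) (v : E) :
    Function.Even fun x => fderiv ℝ f x v := fun x => by
  simpa using mul_fderiv_apply_smul_of_comp_smul (c := -1) (k := -1)
    (fun x => by simpa using hf x) x v

theorem Function.Even.odd_fderiv_apply (hf : f.Even) (v : E) :
    Function.Odd fun x => fderiv ℝ f x v := fun x => by
  have := mul_fderiv_apply_smul_of_comp_smul (c := -1) (k := 1)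
    (fun x => by simpa using hf x) x v
  simp only [neg_smul, one_smul, neg_mul, one_mul] at this
  linarith

theorem ContDiffOn.fderiv_apply_of_isOpen {s : Set E} (hf : ContDiffOn ℝ ∞ f s) (hs : IsOpen s)
    (v : E) : ContDiffOn ℝ ∞ (fun x => fderiv ℝ f x v) s :=
  (hf.fderiv_of_isOpen hs le_rfl).clm_apply contDiffOn_const

theorem fderiv_fderiv_apply_add_of_isOpen {s : Set E} (hs : IsOpen s) (hf : ContDiffOn ℝ ∞ f s)
    (hg : ContDiffOn ℝ ∞ g s) {x : E} (hx : x ∈ s) (u v : E) :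
    fderiv ℝ (fun y => fderiv ℝ (fun z => f z + g z) y v) x u =
      fderiv ℝ (fun y => fderiv ℝ f y v) x u + fderiv ℝ (fun y => fderiv ℝ g y v) x u := by
  have hdiff {φ : E → ℝ} (hφ : ContDiffOn ℝ ∞ φ s) {y : E} (hy : y ∈ s) :
      DifferentiableAt ℝ φ y :=
    (hφ.contDiffAt (hs.mem_nhds hy)).differentiableAt (by simp)
  have hfirst : (fun y => fderiv ℝ (fun z => f z + g z) y v) =ᶠ[nhds x]
      fun y => fderiv ℝ f y v + fderiv ℝ g y v := by
    filter_upwards [hs.mem_nhds hx] with y hy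
    rw [fderiv_fun_add (hdiff hf hy) (hdiff hg hy), _root_.add_apply]
  rw [hfirst.fderiv_eq, fderiv_fun_add (hdiff (hf.fderiv_apply_of_isOpen hs v) hx)
    (hdiff (hg.fderiv_apply_of_isOpen hs v) hx), _root_.add_apply]

theorem eq_zero_of_fderiv_eq_zero_of_comp_smul (hE : 1 < Module.rank ℝ E)
    (hf : DifferentiableOn ℝ f {0}ᶜ) (hf' : Set.EqOn (fderiv ℝ f) 0 {0}ᶜ) {c k : ℝ}
    (hc : c ≠ 0) (hk : k ≠ 1) (hhom : ∀ x, f (c • x) = k * f x) {x : E} (hx : x ≠ 0) :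
    f x = 0 := by
  have hconst := isOpen_compl_singleton.is_const_of_fderiv_eq_zero
    (isConnected_compl_singleton_of_one_lt_rank hE 0).isPreconnected hf hf'
    (x := c • x) (y := x) (smul_ne_zero hc hx) hx
  rw [hhom] at hconst
  have : (k - 1) * f x = 0 := by linarith
  exact (mul_eq_zero.mp this).resolve_left (sub_ne_zero.mpr hk)

theorem eq_zero_of_odd_of_thirdPartials_add_even_eq_zero {ι : Type*} (b : Module.Basis ι ℝ E)
    (hE : 1 < Module.rank ℝ E) {H Q : E → ℝ}
    (hH : ContDiffOn ℝ ∞ H {0}ᶜ) (hQ : ContDiffOn ℝ ∞ Q {0}ᶜ) (hH_odd : H.Odd)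
    (hQ_even : Q.Even) (hH_hom : ∀ t : ℝ, 0 < t → ∀ x, H (t • x) = t ^ 2 * H x)
    (h : ∀ y : E, y ≠ 0 → ∀ i j k, fderiv ℝ (fun z => fderiv ℝ
      (fun w => fderiv ℝ (fun v => H v + Q v) w (b k)) z (b j)) y (b i) = 0)
    {x : E} (hx : x ≠ 0) : H x = 0 := by
  have hs : IsOpen ({0}ᶜ : Set E) := isOpen_compl_singleton
  have hHQ : ContDiffOn ℝ ∞ (fun v => H v + Q v) {0}ᶜ := hH.add hQ
  have hsecond (j k : ι) {y : E} (hy : y ≠ 0) :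
      fderiv ℝ (fun z => fderiv ℝ H z (b k)) y (b j) = 0 := by
    have hsym := isOpen_compl_singleton.is_const_of_fderiv_eq_zero
      (isConnected_compl_singleton_of_one_lt_rank hE 0).isPreconnected
      (((hHQ.fderiv_apply_of_isOpen hs _).fderiv_apply_of_isOpen hs (b j)).differentiableOn
        (by simp))
      (fun z hz => b.continuousLinearMap_eq_zero fun i => h z hz i j k)
      (x := y) (y := -y) hy (neg_ne_zero.mpr hy)
    rw [fderiv_fderiv_apply_add_of_isOpen hs hH hQ hy,
      fderiv_fderiv_apply_add_of_isOpen hs hH hQ (neg_ne_zero.mpr hy)] at hsym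
    have hH_odd' := (hH_odd.even_fderiv_apply (b k)).odd_fderiv_apply (b j) y
    have hQ_even' := (hQ_even.odd_fderiv_apply (b k)).even_fderiv_apply (b j) y
    simp only at hH_odd' hQ_even'
    linarith
  have hfirst (k : ι) {y : E} (hy : y ≠ 0) : fderiv ℝ H y (b k) = 0 := by
    refine eq_zero_of_fderiv_eq_zero_of_comp_smul hE
      ((hH.fderiv_apply_of_isOpen hs (b k)).differentiableOn (by simp))
      (fun z hz => b.continuousLinearMap_eq_zero fun j => hsecond j k hz)
      two_ne_zero (by norm_num : (2 : ℝ) ≠ 1) (fun z => ?_) hy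
    have := mul_fderiv_apply_smul_of_comp_smul (hH_hom 2 two_pos) z (b k)
    linarith
  exact eq_zero_of_fderiv_eq_zero_of_comp_smul hE (hH.differentiableOn (by simp))
    (fun z hz => b.continuousLinearMap_eq_zero fun k => hfirst k hz)
    two_ne_zero (by norm_num : (2 : ℝ) ^ 2 ≠ 1) (hH_hom 2 two_pos) hx

end DirectionalDerivatives

theorem randers_linearForm_eq_of_thirdPartials_eq_zero {E : Type*} [NormedAddCommGroup E]
    [NormedSpace ℝ E] {ι : Type*} (b : Module.Basis ι ℝ E) (hE : 1 < Module.rank ℝ E)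
    {α : E → ℝ} (hα_smooth : ContDiffOn ℝ ∞ α {0}ᶜ) (hα_hom : ∀ (t : ℝ) x, α (t • x) = |t| * α x)
    (hα_ne : ∀ x, x ≠ 0 → α x ≠ 0) (β c₀ : E →L[ℝ] ℝ) (c : ℝ)
    (h : ∀ y : E, y ≠ 0 → ∀ i j k, fderiv ℝ (fun z => fderiv ℝ (fun w => fderiv ℝ
      (fun v => c₀ v * (α v + β v) + c ^ 2 * (α v + β v) ^ 2) w (b k)) z (b j)) y (b i) = 0)
    (x : E) : c₀ x = -2 * c ^ 2 * β x := by
  set L : E →L[ℝ] ℝ := c₀ + (2 * c ^ 2) • β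
  have hsplit : (fun v => c₀ v * (α v + β v) + c ^ 2 * (α v + β v) ^ 2) =
      fun v => L v * α v + (c₀ v * β v + c ^ 2 * (α v ^ 2 + β v ^ 2)) := by
    ext v
    simp only [L, _root_.add_apply, _root_.smul_apply, smul_eq_mul]
    ring
  have hα_even : α.Even := fun v => by simpa using hα_hom (-1) v
  rw [hsplit] at h
  rcases eq_or_ne x 0 with rfl | hx
  · simp
  have hLx : L x * α x = 0 := by
    refine eq_zero_of_odd_of_thirdPartials_add_even_eq_zero b hE
      ((L.contDiff.contDiffOn).mul hα_smooth) ?_ (fun v => by simp [hα_even v]) ?_ ?_ h hx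
    · exact (c₀.contDiff.contDiffOn.mul β.contDiff.contDiffOn).add
        (contDiffOn_const.mul ((hα_smooth.pow 2).add (β.contDiff.contDiffOn.pow 2)))
    · intro v
      simp [hα_even v]
    · intro t ht v
      rw [map_smul, hα_hom, abs_of_pos ht, smul_eq_mul]
      ring
  have := (mul_eq_zero.mp hLx).resolve_right (hα_ne x hx)
  simp only [L, _root_.add_apply, _root_.smul_apply, smul_eq_mul] at this
  linarith

section DotProduct

variable {n : Type*} [Fintype n]

theorem sqrt_dotProduct_mulVec_smul (A : Matrix n n ℝ) (t : ℝ) (v : n → ℝ) :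
    √((t • v) ⬝ᵥ A *ᵥ (t • v)) = |t| * √(v ⬝ᵥ A *ᵥ v) := by
  rw [mulVec_smul, dotProduct_smul, smul_dotProduct, smul_eq_mul, smul_eq_mul, ← mul_assoc,
    ← sq, Real.sqrt_mul (sq_nonneg t), Real.sqrt_sq_eq_abs]

theorem Matrix.PosDef.contDiffOn_sqrt_dotProduct_mulVec {A : Matrix n n ℝ} (hA : A.PosDef) :
    ContDiffOn ℝ ∞ (fun v : n → ℝ => √(v ⬝ᵥ A *ᵥ v)) {0}ᶜ := fun v hv =>
  ((Real.contDiffAt_sqrt (hA.dotProduct_mulVec_pos hv).ne').comp v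
    (by simp only [dotProduct, mulVec]; fun_prop)).contDiffWithinAt

noncomputable def dotProductCLM (u : n → ℝ) : (n → ℝ) →L[ℝ] ℝ :=
  LinearMap.toContinuousLinearMap (dotProductBilin ℝ ℝ u)

theorem dotProductCLM_apply (u v : n → ℝ) : dotProductCLM u v = u ⬝ᵥ v :=
  rfl

end DotProduct

/-- Analytic core of Theorem 3.2: if all third partial derivatives of
`y ↦ c₀(y)·F(y) + c²·F(y)²` vanish for `y ≠ 0`, where `F = α + β` is a Randers-type
function, then `c₀ = −2c²β`; in particular, if `c₀ = 0` and `b ≠ 0`, then `c = 0`. -/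
theorem stmt_14 (n : ℕ) (hn : 2 ≤ n) (A : Matrix (Fin n) (Fin n) ℝ) (hA : A.PosDef)
    (b : Fin n → ℝ) (c₀ : Fin n → ℝ) (c : ℝ)
    (h : ∀ y : Fin n → ℝ, y ≠ 0 → ∀ j k l : Fin n,
      fderiv ℝ (fun z : Fin n → ℝ =>
          fderiv ℝ (fun w : Fin n → ℝ =>
              fderiv ℝ (fun v : Fin n → ℝ =>
                  (c₀ ⬝ᵥ v) * (Real.sqrt (v ⬝ᵥ A *ᵥ v) + b ⬝ᵥ v) +
                    c ^ 2 * (Real.sqrt (v ⬝ᵥ A *ᵥ v) + b ⬝ᵥ v) ^ 2)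
                w (Pi.single l 1))
            z (Pi.single k 1))
        y (Pi.single j 1) = 0) :
    (∀ y : Fin n → ℝ, c₀ ⬝ᵥ y = -2 * c ^ 2 * (b ⬝ᵥ y)) ∧
      ((∀ y : Fin n → ℝ, c₀ ⬝ᵥ y = 0) → b ≠ 0 → c = 0) := by
  have hrank : 1 < Module.rank ℝ (Fin n → ℝ) := by
    rw [rank_fin_fun]
    exact_mod_cast hn
  have hmain : ∀ y, c₀ ⬝ᵥ y = -2 * c ^ 2 * (b ⬝ᵥ y) :=
    randers_linearForm_eq_of_thirdPartials_eq_zero (Pi.basisFun ℝ (Fin n)) hrank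
      hA.contDiffOn_sqrt_dotProduct_mulVec (sqrt_dotProduct_mulVec_smul A)
      (fun v hv => (Real.sqrt_pos.mpr (hA.dotProduct_mulVec_pos hv)).ne')
      (dotProductCLM b) (dotProductCLM c₀) c
      (by simpa only [Pi.basisFun_apply, dotProductCLM_apply] using h)
  refine ⟨hmain, fun hc₀ hb => ?_⟩
  have hbb : c ^ 2 * (b ⬝ᵥ b) = 0 := by linarith [hmain b, hc₀ b]
  simpa [dotProduct_self_eq_zero, hb] using hbb
end

section
/- Let n ≥ 1, let A be a symmetric positive definite real n×n matrix, and let b ∈ ℝⁿ satisfy bᵀA⁻¹b < 1. Set α(y) = √(yᵀAy), β(y) = ∑_i b_i y_i, and F = α + β. Then for every y ≠ 0 in ℝⁿ, the symmetric bilinear form g_y(u, v) = (1/2)·D²(F²)(y)[u, v] (one half of the second Fréchet derivative of F² at y) is positive definite on ℝⁿ. -/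
/-!
Write `α = √(B · ·)` for the symmetric positive definite form `B x z = xᵀ A z` and
`α_y u = B y u / α y`. A direct computation gives
`½ D²(F²)(y)[u, u] = (α_y u + β u)² + (F y / α y) (α u ² - (α_y u)²)`.
Since `β = B · (A⁻¹ b)` and `B (A⁻¹ b) (A⁻¹ b) = bᵀ A⁻¹ b < 1`, Cauchy–Schwarz gives `|β y| < α y`,
so `F y > 0`. The second summand is then nonnegative, again by Cauchy–Schwarz, and vanishes only
when `u = c • y`; in that case the first summand is `(c F y)² > 0`.
-/

open Matrix

section

variable {E : Type*} [NormedAddCommGroup E] [NormedSpace ℝ E] {B : E →L[ℝ] E →L[ℝ] ℝ}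

theorem bilin_sub_smul_self (hB : ∀ x y, B x y = B y x) (u : E) {y : E} (hy : B y y ≠ 0) :
    B (u - (B y u / B y y) • y) (u - (B y u / B y y) • y) = B u u - B y u ^ 2 / B y y := by
  simp only [map_sub, map_smul, _root_.sub_apply, _root_.smul_apply, smul_eq_mul, hB u y]
  field_simp
  ring

theorem sq_bilin_le_mul (hB : ∀ x y, B x y = B y x) (hpos : ∀ x, x ≠ 0 → 0 < B x x)
    (x y : E) : B x y ^ 2 ≤ B x x * B y y := by
  rcases eq_or_ne x 0 with rfl | hx
  · simp
  have hxx := hpos x hx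
  have : 0 ≤ B y y - B x y ^ 2 / B x x := by
    rw [← bilin_sub_smul_self hB y hxx.ne']
    rcases eq_or_ne (y - (B x y / B x x) • x) 0 with h0 | h0
    · simp [h0]
    · exact (hpos _ h0).le
  rw [sub_nonneg, div_le_iff₀ hxx] at this
  linarith

theorem abs_bilin_lt_sqrt (hB : ∀ x y, B x y = B y x) (hpos : ∀ x, x ≠ 0 → 0 < B x x)
    {w : E} (hw : B w w < 1) {y : E} (hy : y ≠ 0) : |B y w| < √(B y y) := by
  rw [← Real.sqrt_sq_eq_abs]
  apply Real.sqrt_lt_sqrt (sq_nonneg _)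
  calc B y w ^ 2 ≤ B y y * B w w := sq_bilin_le_mul hB hpos y w
    _ < B y y := mul_lt_of_lt_one_right (hpos y hy) hw

theorem hasFDerivAt_bilin_self (hB : ∀ x y, B x y = B y x) (z : E) :
    HasFDerivAt (fun w => B w w) ((2 : ℝ) • B z) z := by
  refine (B.hasFDerivAt_of_bilinear (hasFDerivAt_id z) (hasFDerivAt_id z)).congr_fderiv ?_
  ext v
  simp [hB z v, two_mul]

theorem hasFDerivAt_sqrt_bilin_self (hB : ∀ x y, B x y = B y x) {z : E} (hz : 0 < B z z) :
    HasFDerivAt (fun w => √(B w w)) ((√(B z z))⁻¹ • B z) z := by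
  refine ((hasFDerivAt_bilin_self hB z).sqrt hz.ne').congr_fderiv ?_
  rw [smul_smul]
  congr 1
  field_simp

/-- The fundamental tensor `g_y(u, u)` of the Randers function `F = √(B · ·) + β`. -/
noncomputable def randersFundamentalForm (B : E →L[ℝ] E →L[ℝ] ℝ) (β : E →L[ℝ] ℝ) (y u : E) : ℝ :=
  (B y u / √(B y y) + β u) ^ 2 + (√(B y y) + β y) / √(B y y) * (B u u - B y u ^ 2 / B y y)

variable (β : E →L[ℝ] ℝ)

theorem fderiv_sq_randers_apply (hB : ∀ x y, B x y = B y x) {z : E} (hz : 0 < B z z) (u : E) :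
    fderiv ℝ (fun w => (√(B w w) + β w) ^ 2) z u =
      2 * (√(B z z) + β z) * (B z u / √(B z z) + β u) := by
  have hF : HasFDerivAt (fun w => (√(B w w) + β w) ^ 2) _ z :=
    ((hasFDerivAt_sqrt_bilin_self hB hz).add β.hasFDerivAt).pow 2
  rw [hF.fderiv]
  simp only [_root_.smul_apply, _root_.add_apply, smul_eq_mul]
  norm_num
  ring

theorem fderiv_fderiv_sq_randers_apply (hB : ∀ x y, B x y = B y x) {y : E} (hy : 0 < B y y)
    (u : E) :
    fderiv ℝ (fun z => fderiv ℝ (fun w => (√(B w w) + β w) ^ 2) z u) y u =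
      2 * randersFundamentalForm B β y u := by
  have hnear : ∀ᶠ z in nhds y, 0 < B z z :=
    continuousAt_const.eventually_lt (hasFDerivAt_bilin_self hB y).continuousAt hy
  have heq : (fun z => fderiv ℝ (fun w => (√(B w w) + β w) ^ 2) z u) =ᶠ[nhds y]
      fun z => 2 * (√(B z z) + β z) * (B z u * (√(B z z))⁻¹ + β u) := by
    filter_upwards [hnear] with z hz
    rw [fderiv_sq_randers_apply β hB hz, div_eq_mul_inv]
  have hα := hasFDerivAt_sqrt_bilin_self hB hy
  have hinv := (hasDerivAt_inv (Real.sqrt_pos.mpr hy).ne').comp_hasFDerivAt y hα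
  have hG : HasFDerivAt (fun z => 2 * (√(B z z) + β z) * (B z u * (√(B z z))⁻¹ + β u)) _ y :=
    ((hα.add β.hasFDerivAt).const_mul 2).mul
      (((B.flip u).hasFDerivAt.mul hinv).add_const (β u))
  rw [heq.fderiv_eq, hG.fderiv, randersFundamentalForm]
  simp only [_root_.smul_apply, _root_.add_apply, ContinuousLinearMap.flip_apply, Pi.add_apply,
    Function.comp_apply]
  have hsq := Real.sq_sqrt hy.le
  set s := √(B y y)
  rw [← hsq]
  field_simp
  ring

theorem randersFundamentalForm_pos (hB : ∀ x y, B x y = B y x)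
    (hpos : ∀ x, x ≠ 0 → 0 < B x x) {y u : E} (hy : y ≠ 0) (hu : u ≠ 0)
    (hF : 0 < √(B y y) + β y) : 0 < randersFundamentalForm B β y u := by
  have hyy := hpos y hy
  have hs : 0 < √(B y y) := Real.sqrt_pos.mpr hyy
  set c := B y u / B y y
  rw [randersFundamentalForm, ← bilin_sub_smul_self hB u hyy.ne']
  rcases eq_or_ne (u - c • y) 0 with hv | hv
  · have huy : u = c • y := sub_eq_zero.mp hv
    have hc : c ≠ 0 := by rintro hc; simp [hc] at huy; exact hu huy
    have hfirst : B y u / √(B y y) + β u = c * (√(B y y) + β y) := by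
      have hβu : β u = c * β y := by rw [huy, map_smul, smul_eq_mul]
      rw [hβu, ← div_mul_cancel₀ (B y u) hyy.ne', mul_div_assoc, Real.div_sqrt]
      ring
    rw [hv, map_zero, mul_zero, add_zero, hfirst]
    positivity
  · have := hpos _ hv
    positivity

end

theorem stmt_16_general (n : ℕ) (A : Matrix (Fin n) (Fin n) ℝ) (hA : A.PosDef)
    (b : Fin n → ℝ) (hb : b ⬝ᵥ A⁻¹ *ᵥ b < 1)
    (y : Fin n → ℝ) (hy : y ≠ 0) :
    ∀ u : Fin n → ℝ, u ≠ 0 →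
      0 < (1 / 2 : ℝ) *
        fderiv ℝ (fun z : Fin n → ℝ =>
            fderiv ℝ (fun w : Fin n → ℝ =>
                (Real.sqrt (w ⬝ᵥ A *ᵥ w) + b ⬝ᵥ w) ^ 2) z u)
          y u := by
  intro u hu
  set B : (Fin n → ℝ) →L[ℝ] (Fin n → ℝ) →L[ℝ] ℝ :=
    (Matrix.toLinearMap₂' ℝ A).toContinuousBilinearMap
  have hBA : ∀ x z, B x z = x ⬝ᵥ A *ᵥ z := Matrix.toLinearMap₂'_apply' A
  have hB : ∀ x z, B x z = B z x := fun x z => by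
    rw [hBA, hBA, dotProduct_mulVec, ← mulVec_transpose, dotProduct_comm,
      ← conjTranspose_eq_transpose_of_trivial, hA.1]
  have hpos : ∀ x, x ≠ 0 → 0 < B x x := fun x hx => by
    simpa [hBA] using hA.dotProduct_mulVec_pos hx
  set a := A⁻¹ *ᵥ b
  have hBa : ∀ x, B x a = b ⬝ᵥ x := fun x => by
    rw [hBA, mulVec_mulVec, mul_nonsing_inv A ((isUnit_iff_isUnit_det A).mp hA.isUnit),
      one_mulVec, dotProduct_comm]
  have hF : 0 < √(B y y) + B y a := by
    have := abs_bilin_lt_sqrt hB hpos (by rwa [hBa]) hy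
    linarith [neg_abs_le (B y a)]
  have hfun : (fun w => (√(w ⬝ᵥ A *ᵥ w) + b ⬝ᵥ w) ^ 2) =
      fun x => (√(B x x) + B.flip a x) ^ 2 := by
    funext x
    rw [ContinuousLinearMap.flip_apply, hBa, hBA]
  rw [hfun, fderiv_fderiv_sq_randers_apply _ hB (hpos y hy)]
  have := randersFundamentalForm_pos (B.flip a) hB hpos hy hu hF
  positivity

/-- Under the condition `bᵀA⁻¹b < 1`, the fundamental tensor of the Randers-type function
`F = α + β`, i.e. one half of the second Fréchet derivative of `F²`, is positive definite
at every `y ≠ 0`. -/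
theorem stmt_16 (n : ℕ) (hn : 1 ≤ n) (A : Matrix (Fin n) (Fin n) ℝ) (hA : A.PosDef)
    (b : Fin n → ℝ) (hb : b ⬝ᵥ A⁻¹ *ᵥ b < 1)
    (y : Fin n → ℝ) (hy : y ≠ 0) :
    ∀ u : Fin n → ℝ, u ≠ 0 →
      0 < (1 / 2 : ℝ) *
        fderiv ℝ (fun z : Fin n → ℝ =>
            fderiv ℝ (fun w : Fin n → ℝ =>
                (Real.sqrt (w ⬝ᵥ A *ᵥ w) + b ⬝ᵥ w) ^ 2) z u)
          y u :=
  stmt_16_general n A hA b hb y hy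
end
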